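/- For all integers n ≥ 3 and 1 ≤ i ≤ n−2 and all t ∈ (−1,1), ρ_{n+2,i+1}(t) = (1/(2π))·ρ_{n,i}'(t). -/

import Mathlib

open Real Set Filter Topology

/-- The Gauss hypergeometric function `₂F₁(a,b;c;x)`. -/
noncomputable def gaussHyp (a b c x : ℝ) : ℝ :=
  ∑' k : ℕ, ((ascPochhammer ℝ k).eval a * (ascPochhammer ℝ k).eval b /
      ((ascPochhammer ℝ k).eval c * (Nat.factorial k))) * x ^ k

/-- The function `ρ_{n,i}` on `(-1,1)`. -/
noncomputable def rho (n i : ℕ) (t : ℝ) : ℝ :=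
  (Real.Gamma i * Real.Gamma ((n : ℝ) - i - 1) /
      (4 * (2 * π) ^ (((n : ℝ) - 2) / 2) * Real.Gamma ((n : ℝ) / 2))) *
    (1 - t) ^ (-(((n : ℝ) - 2) / 2)) *
    gaussHyp ((n : ℝ) / 2 - i) ((i : ℝ) + 1 - (n : ℝ) / 2) ((n : ℝ) / 2) ((1 + t) / 2)

noncomputable def hgCoeff (a c : ℝ) (k : ℕ) : ℝ :=
  (ascPochhammer ℝ k).eval a * (ascPochhammer ℝ k).eval (1 - a) /
    ((ascPochhammer ℝ k).eval c * (Nat.factorial k))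

lemma poch_pos {c : ℝ} (hc : 0 < c) (k : ℕ) : 0 < (ascPochhammer ℝ k).eval c := by
  induction k with
  | zero => simp [ascPochhammer_zero]
  | succ n ih =>
      rw [ascPochhammer_succ_eval]
      positivity

lemma poch_add_one_eval {c : ℝ} (hc : c ≠ 0) (k : ℕ) :
    (ascPochhammer ℝ k).eval (c + 1) = (ascPochhammer ℝ k).eval c * (c + k) / c := by
  induction k with
  | zero => simp [ascPochhammer_zero]; field_simp
  | succ n ih =>
      rw [ascPochhammer_succ_eval, ascPochhammer_succ_eval, ih]
      push_cast
      ring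

lemma hgCoeff_succ {a c : ℝ} (hc : 0 < c) (k : ℕ) :
    hgCoeff a c (k + 1) = hgCoeff a c k * ((a + k) * (1 - a + k) / ((c + k) * (k + 1))) := by
  have h1 : (ascPochhammer ℝ k).eval c ≠ 0 := (poch_pos hc k).ne'
  have h2 : (c + (k : ℝ)) ≠ 0 := by positivity
  have h3 : ((Nat.factorial k : ℝ)) ≠ 0 := by positivity
  have h4 : ((k : ℝ) + 1) ≠ 0 := by positivity
  rw [hgCoeff, hgCoeff, ascPochhammer_succ_eval, ascPochhammer_succ_eval,
    ascPochhammer_succ_eval, Nat.factorial_succ]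
  push_cast
  field_simp

lemma hg_ev_bound (a c ρ ρ' : ℝ) (hc : 0 < c) (hρ : 0 ≤ ρ) (hρ' : ρ < ρ') :
    ∀ᶠ k : ℕ in atTop, |a + k| * |1 - a + k| * ρ ≤ ρ' * ((c + k) * k) := by
  set A := |a| with hA
  set B := |1 - a| with hB
  have hA0 : 0 ≤ A := abs_nonneg _
  have hB0 : 0 ≤ B := abs_nonneg _
  have hev : ∀ᶠ k : ℕ in atTop, (ρ * (A + B + A * B)) / (ρ' - ρ) ≤ (k : ℝ) :=
    tendsto_natCast_atTop_atTop.eventually_ge_atTop _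
  filter_upwards [hev, eventually_ge_atTop 1] with k hk hk1
  have hk1' : (1 : ℝ) ≤ (k : ℝ) := by exact_mod_cast hk1
  have h1 : |a + (k : ℝ)| ≤ A + k := by
    calc |a + (k : ℝ)| ≤ |a| + |(k : ℝ)| := abs_add_le _ _
    _ = A + k := by rw [abs_of_nonneg (by positivity : (0:ℝ) ≤ (k:ℝ))]
  have h2 : |1 - a + (k : ℝ)| ≤ B + k := by
    calc |1 - a + (k : ℝ)| ≤ |1 - a| + |(k : ℝ)| := abs_add_le _ _
    _ = B + k := by rw [abs_of_nonneg (by positivity : (0:ℝ) ≤ (k:ℝ))]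
  have hkey : (ρ * (A + B + A * B)) ≤ (ρ' - ρ) * k := by
    rw [div_le_iff₀ (by linarith)] at hk
    linarith [hk]
  calc |a + (k:ℝ)| * |1 - a + (k:ℝ)| * ρ ≤ (A + k) * (B + k) * ρ := by
        apply mul_le_mul_of_nonneg_right _ hρ
        exact mul_le_mul h1 h2 (abs_nonneg _) (by positivity)
    _ ≤ ρ' * ((c + k) * k) := by
        have e1 : ρ * (A + B + A*B) * k ≤ (ρ' - ρ) * k * k :=
          mul_le_mul_of_nonneg_right hkey (by positivity)
        have e2 : (0:ℝ) ≤ ρ * A * B * ((k:ℝ) - 1) := by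
          have : (0:ℝ) ≤ (k:ℝ) - 1 := by linarith
          positivity
        have e3 : (0:ℝ) ≤ ρ' * c * k := by
          have : 0 < ρ' := lt_of_le_of_lt hρ hρ'
          positivity
        nlinarith [e1, e2, e3]
lemma hg_summable_M (a c r : ℝ) (hc : 0 < c) (hr0 : 0 ≤ r) (hr1 : r < 1) :
    Summable (fun k : ℕ => |hgCoeff a c k| * k * r ^ (k - 1)) := by
  set r' : ℝ := (1 + r) / 2 with hr'
  have hrr' : r < r' := by rw [hr']; linarith
  have hr'1 : r' < 1 := by rw [hr']; linarith
  apply summable_of_ratio_norm_eventually_le hr'1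
  filter_upwards [hg_ev_bound a c r r' hc hr0 hrr', eventually_ge_atTop 1] with k hbd hk1
  have hck : (0:ℝ) < c + k := by positivity
  have hk1' : (1:ℝ) ≤ (k:ℝ) := by exact_mod_cast hk1
  have hXr : |a + (k:ℝ)| * |1 - a + (k:ℝ)| * r / (c + k) ≤ r' * k := by
    rw [div_le_iff₀ hck]
    calc |a + (k:ℝ)| * |1 - a + (k:ℝ)| * r ≤ r' * ((c + k) * k) := hbd
      _ = r' * (k:ℝ) * (c + k) := by ring
  have hu1 : |hgCoeff a c (k+1)| =
      |hgCoeff a c k| * (|a + (k:ℝ)| * |1 - a + (k:ℝ)| / ((c + k) * (k + 1))) := by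
    rw [hgCoeff_succ hc, abs_mul, abs_div, abs_mul, abs_mul,
      abs_of_pos hck, abs_of_pos (by positivity : (0:ℝ) < (k:ℝ) + 1)]
  have hpow : r ^ k = r ^ (k - 1) * r := by
    rw [← pow_succ]
    congr 1
    omega
  rw [Real.norm_eq_abs, Real.norm_eq_abs,
    abs_of_nonneg (by positivity : (0:ℝ) ≤ |hgCoeff a c (k+1)| * ((k:ℕ)+1:ℕ) * r ^ ((k+1) - 1)),
    abs_of_nonneg (by positivity : (0:ℝ) ≤ |hgCoeff a c k| * k * r ^ (k - 1))]
  have hred : ((k:ℕ)+1:ℕ) - 1 = k := by omega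
  rw [hred, hu1]
  push_cast
  have heq : |hgCoeff a c k| * (|a + (k:ℝ)| * |1 - a + (k:ℝ)| / ((c + k) * ((k:ℝ) + 1))) *
      ((k:ℝ) + 1) * r ^ k
      = (|hgCoeff a c k| * r ^ (k-1)) * (|a + (k:ℝ)| * |1 - a + (k:ℝ)| * r / (c + k)) := by
    rw [hpow]
    field_simp
  rw [heq]
  calc (|hgCoeff a c k| * r ^ (k-1)) * (|a + (k:ℝ)| * |1 - a + (k:ℝ)| * r / (c + k))
      ≤ (|hgCoeff a c k| * r ^ (k-1)) * (r' * k) := by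
        apply mul_le_mul_of_nonneg_left hXr (by positivity)
    _ = r' * (|hgCoeff a c k| * (k:ℝ) * r ^ (k-1)) := by ring
lemma hg_summable {a c x : ℝ} (hc : 0 < c) (hx : |x| < 1) :
    Summable (fun k : ℕ => hgCoeff a c k * x ^ k) := by
  set r' : ℝ := (1 + |x|) / 2 with hr'
  have hx0 : 0 ≤ |x| := abs_nonneg x
  have hrr' : |x| < r' := by rw [hr']; linarith
  have hr'1 : r' < 1 := by rw [hr']; linarith
  apply summable_of_ratio_norm_eventually_le hr'1
  filter_upwards [hg_ev_bound a c |x| r' hc hx0 hrr'] with k hbd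
  have hck : (0:ℝ) < c + k := by positivity
  have hk1 : (0:ℝ) < (k:ℝ) + 1 := by positivity
  rw [Real.norm_eq_abs, Real.norm_eq_abs, abs_mul, abs_mul, abs_pow, abs_pow,
    hgCoeff_succ hc, abs_mul, abs_div, abs_mul, abs_mul, abs_of_pos hck, abs_of_pos hk1]
  push_cast
  rw [pow_succ]
  have hXr : |a + (k:ℝ)| * |1 - a + (k:ℝ)| / ((c + k) * ((k:ℝ)+1)) * |x| ≤ r' := by
    rw [div_mul_eq_mul_div, div_le_iff₀ (by positivity)]
    calc |a + (k:ℝ)| * |1 - a + (k:ℝ)| * |x| ≤ r' * ((c + k) * k) := hbd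
      _ ≤ r' * ((c + k) * ((k:ℝ)+1)) := by
          apply mul_le_mul_of_nonneg_left _ (by positivity)
          apply mul_le_mul_of_nonneg_left (by linarith) hck.le
  calc |hgCoeff a c k| * (|a + (k:ℝ)| * |1 - a + (k:ℝ)| / ((c + k) * ((k:ℝ)+1))) *
        (|x| ^ k * |x|)
      = (|hgCoeff a c k| * |x| ^ k) *
        (|a + (k:ℝ)| * |1 - a + (k:ℝ)| / ((c + k) * ((k:ℝ)+1)) * |x|) := by ring
    _ ≤ (|hgCoeff a c k| * |x| ^ k) * r' := by
        apply mul_le_mul_of_nonneg_left hXr (by positivity)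
    _ = r' * (|hgCoeff a c k| * |x| ^ k) := by ring

lemma hg_summable_deriv {a c x : ℝ} (hc : 0 < c) (hx : |x| < 1) :
    Summable (fun k : ℕ => hgCoeff a c k * ((k:ℝ) * x ^ (k - 1))) := by
  apply Summable.of_norm_bounded (hg_summable_M a c |x| hc (abs_nonneg x) hx)
  intro k
  apply le_of_eq
  rw [Real.norm_eq_abs, abs_mul, abs_mul, abs_pow, Nat.abs_cast]
  ring
lemma hg_hasDerivAt {a c x : ℝ} (hc : 0 < c) (hx : |x| < 1) :
    HasDerivAt (fun y => ∑' k : ℕ, hgCoeff a c k * y ^ k)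
      (∑' k : ℕ, hgCoeff a c k * ((k:ℝ) * x ^ (k - 1))) x := by
  set r : ℝ := (1 + |x|) / 2 with hr
  have hx0 : 0 ≤ |x| := abs_nonneg x
  have hxr : |x| < r := by rw [hr]; linarith
  have hr0 : 0 < r := by rw [hr]; linarith
  have hr1 : r < 1 := by rw [hr]; linarith
  apply hasDerivAt_tsum_of_isPreconnected (hg_summable_M a c r hc hr0.le hr1)
    (Metric.isOpen_ball (x := (0:ℝ)) (ε := r)) (convex_ball (0:ℝ) r).isPreconnected
    (g := fun k y => hgCoeff a c k * y ^ k)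
    (g' := fun k y => hgCoeff a c k * ((k:ℝ) * y ^ (k - 1))) (y₀ := (0:ℝ))
  · intro k y _
    exact (hasDerivAt_pow k y).const_mul (hgCoeff a c k)
  · intro k y hy
    rw [Metric.mem_ball, dist_zero_right, Real.norm_eq_abs] at hy
    rw [Real.norm_eq_abs, abs_mul, abs_mul, abs_pow, Nat.abs_cast]
    have : |y| ^ (k-1) ≤ r ^ (k-1) := pow_le_pow_left₀ (abs_nonneg y) hy.le _
    calc |hgCoeff a c k| * ((k:ℝ) * |y| ^ (k-1))
        ≤ |hgCoeff a c k| * ((k:ℝ) * r ^ (k-1)) := by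
          apply mul_le_mul_of_nonneg_left _ (abs_nonneg _)
          exact mul_le_mul_of_nonneg_left this (by positivity)
      _ = |hgCoeff a c k| * (k:ℝ) * r ^ (k-1) := by ring
  · exact Metric.mem_ball_self hr0
  · exact hg_summable hc (by simpa using zero_lt_one)
  · rw [Metric.mem_ball, dist_zero_right, Real.norm_eq_abs]; exact hxr
lemma hgCoeff_c_succ {a c : ℝ} (hc : 0 < c) (k : ℕ) :
    hgCoeff a (c + 1) k = hgCoeff a c k * c / (c + k) := by
  have h1 : (ascPochhammer ℝ k).eval c ≠ 0 := (poch_pos hc k).ne'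
  have h2 : (c + (k : ℝ)) ≠ 0 := by positivity
  have h3 : ((Nat.factorial k : ℝ)) ≠ 0 := by positivity
  rw [hgCoeff, hgCoeff, poch_add_one_eval hc.ne']
  rw [div_mul_eq_mul_div, div_div_eq_mul_div]
  rw [div_eq_div_iff (by positivity) (by positivity)]
  field_simp

lemma hg_combination {a c x : ℝ} (hc : 0 < c) (hx : |x| < 1) :
    (c - 1) * (∑' k : ℕ, hgCoeff a c k * x ^ k)
      + (1 - x) * (∑' k : ℕ, hgCoeff a c k * ((k:ℝ) * x ^ (k - 1)))
    = ((c - a) * (c - (1 - a)) / c) * (∑' k : ℕ, hgCoeff a (c + 1) k * x ^ k) := by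
  have hc1 : (0:ℝ) < c + 1 := by linarith
  have S := hg_summable (a := a) hc hx
  have SD := hg_summable_deriv (a := a) hc hx
  have S' := hg_summable (a := a) (c := c + 1) hc1 hx
  set F := ∑' k : ℕ, hgCoeff a c k * x ^ k with hF
  set D := ∑' k : ℕ, hgCoeff a c k * ((k:ℝ) * x ^ (k - 1)) with hDdef
  have hD : HasSum (fun k : ℕ => hgCoeff a c k * ((k:ℝ) * x ^ (k - 1))) D := SD.hasSum
  have h2 : HasSum (fun k : ℕ => hgCoeff a c (k + 1) * (((k:ℝ) + 1) * x ^ k)) D := by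
    have := (hasSum_nat_add_iff' (f := fun k : ℕ => hgCoeff a c k * ((k:ℝ) * x ^ (k - 1))) 1).2 hD
    simp only [Finset.range_one, Finset.sum_singleton, Nat.cast_zero, zero_mul, mul_zero,
      sub_zero, Nat.add_sub_cancel, Nat.cast_add, Nat.cast_one] at this
    exact this
  have h3 : HasSum (fun k : ℕ => hgCoeff a c k * ((k:ℝ) * x ^ k)) (x * D) := by
    have := hD.mul_left x
    have hfe : (fun k : ℕ => hgCoeff a c k * ((k:ℝ) * x ^ k))
        = fun i : ℕ => x * (hgCoeff a c i * ((i:ℝ) * x ^ (i - 1))) := by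
      funext k
      cases k with
      | zero => simp
      | succ n => simp only [Nat.add_sub_cancel, Nat.cast_add, Nat.cast_one, pow_succ]; ring
    rw [hfe]; exact this
  have h1 : HasSum (fun k : ℕ => (c - 1) * (hgCoeff a c k * x ^ k)) ((c - 1) * F) :=
    S.hasSum.mul_left _
  have hR : HasSum (fun k : ℕ => ((c - a) * (c - (1 - a)) / c) * (hgCoeff a (c + 1) k * x ^ k))
      (((c - a) * (c - (1 - a)) / c) * (∑' k : ℕ, hgCoeff a (c + 1) k * x ^ k)) :=
    S'.hasSum.mul_left _
  have hcomb := (h1.add h2).sub h3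
  have hfun : (fun k : ℕ => (c - 1) * (hgCoeff a c k * x ^ k)
      + hgCoeff a c (k + 1) * (((k:ℝ) + 1) * x ^ k) - hgCoeff a c k * ((k:ℝ) * x ^ k))
      = fun k : ℕ => ((c - a) * (c - (1 - a)) / c) * (hgCoeff a (c + 1) k * x ^ k) := by
    funext k
    have hck : (0:ℝ) < c + k := by positivity
    have hk1 : (0:ℝ) < (k:ℝ) + 1 := by positivity
    rw [hgCoeff_succ hc, hgCoeff_c_succ hc]
    field_simp
    ring
  rw [hfun] at hcomb
  have := hcomb.unique hR
  linear_combination this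
/-- Recurrence relation `ρ_{n+2,i+1} = (2π)⁻¹ ρ_{n,i}'`. -/
theorem stmt_11 (n i : ℕ) (hn : 3 ≤ n) (hi1 : 1 ≤ i) (hi2 : i ≤ n - 2)
    (t : ℝ) (ht : t ∈ Set.Ioo (-1 : ℝ) 1) :
    rho (n + 2) (i + 1) t = (1 / (2 * π)) * deriv (rho n i) t := by
  obtain ⟨ht1, ht2⟩ := ht
  have hin : i + 2 ≤ n := by omega
  have hN3 : (3:ℝ) ≤ (n:ℝ) := by exact_mod_cast hn
  have hI1 : (1:ℝ) ≤ (i:ℝ) := by exact_mod_cast hi1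
  have hI2 : (i:ℝ) + 2 ≤ (n:ℝ) := by exact_mod_cast hin
  set N : ℝ := (n : ℝ) with hNdef
  set I : ℝ := (i : ℝ) with hIdef
  set a : ℝ := N / 2 - I with hadef
  set c : ℝ := N / 2 with hcdef
  set s : ℝ := (N - 2) / 2 with hsdef
  set x : ℝ := (1 + t) / 2 with hxdef
  have hc : 0 < c := by rw [hcdef]; linarith
  have h1t : 0 < 1 - t := by linarith
  have hx : |x| < 1 := by
    rw [abs_lt]; constructor <;> [skip; skip] <;> rw [hxdef] <;> linarith
  have hs : s = c - 1 := by rw [hsdef, hcdef]; ring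
  -- derivative of rho n i
  have hb : I + 1 - N / 2 = 1 - a := by rw [hadef]; ring
  have hrho_eq : rho n i = fun y : ℝ =>
      (Real.Gamma I * Real.Gamma (N - I - 1) / (4 * (2 * π) ^ s * Real.Gamma c)
        * (1 - y) ^ (-s)) * gaussHyp a (1 - a) c ((1 + y) / 2) := by
    funext y
    rw [rho, ← hb, hadef, hcdef, hsdef]
  set C : ℝ := Real.Gamma I * Real.Gamma (N - I - 1) / (4 * (2 * π) ^ s * Real.Gamma c)
    with hCdef
  set D : ℝ := ∑' k : ℕ, hgCoeff a c k * ((k:ℝ) * x ^ (k - 1)) with hDdef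
  have hP : HasDerivAt (fun y : ℝ => (1 - y) ^ (-s)) ((0 - 1) * (-s) * (1 - t) ^ (-s - 1)) t := by
    exact HasDerivAt.rpow_const ((hasDerivAt_const t (1:ℝ)).sub (hasDerivAt_id t))
      (Or.inl h1t.ne')
  have hinner : HasDerivAt (fun y : ℝ => (1 + y) / 2) (1 / 2) t := by
    simpa using ((hasDerivAt_id t).const_add 1).div_const 2
  have houter : HasDerivAt (fun y => ∑' k : ℕ, hgCoeff a c k * y ^ k) D x :=
    hg_hasDerivAt hc hx
  have hG : HasDerivAt (fun y : ℝ => gaussHyp a (1 - a) c ((1 + y) / 2)) (D * (1 / 2)) t := by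
    have := houter.comp t hinner
    exact this
  have hrho : HasDerivAt (rho n i)
      ((C * ((0 - 1) * (-s) * (1 - t) ^ (-s - 1))) * gaussHyp a (1 - a) c x
        + (C * (1 - t) ^ (-s)) * (D * (1 / 2))) t := by
    rw [hrho_eq]
    exact (hP.const_mul C).mul hG
  rw [hrho.deriv]
  -- unfold LHS
  have e1 : ((n:ℝ) + 2) / 2 - ((i:ℝ) + 1) = a := by rw [hadef]; ring
  have e2 : ((i:ℝ) + 1) + 1 - ((n:ℝ) + 2) / 2 = 1 - a := by rw [hadef]; ring
  have e3 : ((n:ℝ) + 2) / 2 = c + 1 := by rw [hcdef]; ring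
  have e4 : ((n:ℝ) + 2 - 2) / 2 = s + 1 := by rw [hsdef]; ring
  have e5 : (n:ℝ) + 2 - ((i:ℝ) + 1) - 1 = (N - I - 1) + 1 := by ring
  rw [rho]
  push_cast
  rw [e1, e2, e3, e4, e5]
  -- Gamma recurrences
  have hGI : Real.Gamma (I + 1) = I * Real.Gamma I := Real.Gamma_add_one (by linarith)
  have hGNI : Real.Gamma ((N - I - 1) + 1) = (N - I - 1) * Real.Gamma (N - I - 1) :=
    Real.Gamma_add_one (by linarith)
  have hGc : Real.Gamma (c + 1) = c * Real.Gamma c := Real.Gamma_add_one hc.ne'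
  have hpow2 : (2 * π) ^ (s + 1) = (2 * π) ^ s * (2 * π) :=
    Real.rpow_add_one (by positivity) s
  have hpowt : (1 - t) ^ (-(s + 1)) = (1 - t) ^ (-s - 1) := by
    congr 1; ring
  rw [hGI, hGNI, hGc, hpow2, hpowt]
  -- key combination identity
  have key := hg_combination (a := a) hc hx
  have hxx : 1 - x = (1 - t) / 2 := by rw [hxdef]; ring
  have hPP : (1 - t) ^ (-s) = (1 - t) ^ (-s - 1) * (1 - t) := by
    rw [← Real.rpow_add_one h1t.ne']
    congr 1; ring
  rw [hPP]
  -- express gaussHyp via hgCoeff sums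
  have hg1 : gaussHyp a (1 - a) c x = ∑' k : ℕ, hgCoeff a c k * x ^ k := rfl
  have hg2 : gaussHyp a (1 - a) (c + 1) x = ∑' k : ℕ, hgCoeff a (c + 1) k * x ^ k := rfl
  rw [hg1, hg2] at *
  -- nonvanishing facts
  have hGIpos : 0 < Real.Gamma I := Real.Gamma_pos_of_pos (by linarith)
  have hGNIpos : 0 < Real.Gamma (N - I - 1) := Real.Gamma_pos_of_pos (by linarith)
  have hGcpos : 0 < Real.Gamma c := Real.Gamma_pos_of_pos hc
  have hpi : (0:ℝ) < π := Real.pi_pos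
  have hca : c - a = I := by rw [hcdef, hadef]; ring
  have hca' : c - (1 - a) = N - I - 1 := by
    rw [hcdef, hadef]; ring
  rw [hca, hca'] at key
  have hq : (0:ℝ) < (2 * π) ^ s := by positivity
  rw [hCdef, hs]
  rw [hxx] at key
  linear_combination (-(1 / (2 * π)) * (Real.Gamma I * Real.Gamma (N - I - 1) /
    (4 * (2 * π) ^ (c - 1) * Real.Gamma c)) * (1 - t) ^ (-(c - 1) - 1)) * key
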